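/- Let H ∈ (0,1/2) and δ ∈ (0,H), and set γ = 2/(1-2δ). Then for the power-law kernel K(t)=t^{H-1/2} and its ε-shift K^ε(t)=(t+ε)^{H-1/2}, the L^γ([0,T]) distance satisfies ‖K - K^ε‖_{L^γ([0,T])} ≤ ε^{H-δ} / √(H-δ) for every ε > 0 and T > 0. -/

import Mathlib

/-!
For `s > 0` the kernel difference `s^a - (s+ε)^a` (with `a = H - 1/2 < 0`) is nonnegative,
so superadditivity of `x ↦ x^γ` (`γ ≥ 1`) gives `|s^a - (s+ε)^a|^γ ≤ s^{aγ} - (s+ε)^{aγ}`.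
Since `aγ + 1 = γ(H-δ) > 0`, the right side integrates over `[0,T]` to at most
`ε^{γ(H-δ)}/(γ(H-δ))`, and `(γ(H-δ))^{1/γ} ≥ (H-δ)^{1/γ} ≥ √(H-δ)` because `γ ≥ 2` and
`H - δ < 1`.
-/

open Real MeasureTheory

theorem Real.rpow_sub_le_sub_rpow {x y p : ℝ} (hy : 0 ≤ y) (hyx : y ≤ x) (hp : 1 ≤ p) :
    (x - y) ^ p ≤ x ^ p - y ^ p := by
  have := add_rpow_le_rpow_add (sub_nonneg.2 hyx) hy hp
  rw [sub_add_cancel] at this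
  linarith

theorem abs_rpow_sub_rpow_add_rpow_le {s ε a q : ℝ} (hs : 0 < s) (hε : 0 ≤ ε) (ha : a ≤ 0)
    (hq : 1 ≤ q) : |s ^ a - (s + ε) ^ a| ^ q ≤ s ^ (a * q) - (s + ε) ^ (a * q) := by
  have hsε : 0 < s + ε := by linarith
  have hle : (s + ε) ^ a ≤ s ^ a := rpow_le_rpow_of_nonpos hs (by linarith) ha
  rw [abs_of_nonneg (sub_nonneg.2 hle), rpow_mul hs.le, rpow_mul hsε.le]
  exact rpow_sub_le_sub_rpow (rpow_nonneg hsε.le a) hle hq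

theorem intervalIntegrable_rpow_add {r : ℝ} (hr : -1 < r) (ε a b : ℝ) :
    IntervalIntegrable (fun s : ℝ => (s + ε) ^ r) volume a b := by
  simpa using
    (intervalIntegral.intervalIntegrable_rpow' hr (a := a + ε) (b := b + ε)).comp_add_right ε

theorem integral_rpow_sub_rpow_add_le {r T ε : ℝ} (hr : -1 < r) (hT : 0 ≤ T) (hε : 0 ≤ ε) :
    ∫ s in (0:ℝ)..T, (s ^ r - (s + ε) ^ r) ≤ ε ^ (r + 1) / (r + 1) := by
  have hr1 : 0 < r + 1 := by linarith
  rw [intervalIntegral.integral_sub (intervalIntegral.intervalIntegrable_rpow' hr)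
      (intervalIntegrable_rpow_add hr ε 0 T),
    intervalIntegral.integral_comp_add_right (fun s => s ^ r) ε, zero_add,
    integral_rpow (Or.inl hr), integral_rpow (Or.inl hr), zero_rpow hr1.ne', sub_zero,
    div_sub_div_same, div_le_div_iff_of_pos_right hr1]
  have : T ^ (r + 1) ≤ (T + ε) ^ (r + 1) := rpow_le_rpow hT (by linarith) hr1.le
  linarith

theorem integral_abs_rpow_sub_rpow_add_rpow_le {a q T ε : ℝ} (ha : a ≤ 0) (hq : 1 ≤ q)
    (haq : -1 < a * q) (hT : 0 ≤ T) (hε : 0 ≤ ε) :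
    ∫ s in (0:ℝ)..T, |s ^ a - (s + ε) ^ a| ^ q ≤ ε ^ (a * q + 1) / (a * q + 1) := by
  refine le_trans ?_ (integral_rpow_sub_rpow_add_le haq hT hε)
  have hint := (intervalIntegral.intervalIntegrable_rpow' haq (a := 0) (b := T)).sub
    (intervalIntegrable_rpow_add haq ε 0 T)
  rw [intervalIntegral.integral_of_le hT, intervalIntegral.integral_of_le hT]
  refine integral_mono_of_nonneg (ae_of_all _ fun s => by positivity) hint.1 ?_
  filter_upwards [ae_restrict_mem measurableSet_Ioc] with s hs
  exact abs_rpow_sub_rpow_add_rpow_le hs.1 hε ha hq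

theorem sqrt_le_mul_rpow_one_div {c γ : ℝ} (hc : 0 < c) (hc1 : c ≤ 1) (hγ : 2 ≤ γ) :
    √c ≤ (γ * c) ^ (1 / γ) := by
  have hγ0 : 0 < γ := by linarith
  calc √c = c ^ (1 / 2 : ℝ) := sqrt_eq_rpow c
    _ ≤ c ^ (1 / γ) := rpow_le_rpow_of_exponent_ge hc hc1 (by gcongr)
    _ ≤ (γ * c) ^ (1 / γ) := rpow_le_rpow hc.le (by nlinarith) (by positivity)

/-- Rate of convergence of the shifted power-law kernel: for `δ ∈ (0,H)` and
`γ = 2/(1-2δ)`, the `L^γ([0,T])` distance is at most `ε^{H-δ}/√(H-δ)`. -/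
theorem stmt_6 (H δ γ T ε : ℝ) (hH : H ∈ Set.Ioo (0:ℝ) (1/2))
    (hδ : δ ∈ Set.Ioo (0:ℝ) H) (hγ : γ = 2 / (1 - 2*δ)) (hT : 0 < T) (hε : 0 < ε) :
    (∫ s in (0:ℝ)..T, |s ^ (H - 1/2) - (s + ε) ^ (H - 1/2)| ^ γ) ^ (1/γ) ≤
      ε ^ (H - δ) / Real.sqrt (H - δ) := by
  obtain ⟨-, hH2⟩ := hH
  obtain ⟨hδ0, hδH⟩ := hδ
  have hγδ : γ * (1 - 2 * δ) = 2 := by rw [hγ]; field_simp [show 1 - 2 * δ ≠ 0 by linarith]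
  have hγ2 : 2 ≤ γ := by nlinarith
  have hexp : (H - 1/2) * γ + 1 = γ * (H - δ) := by linear_combination (-1/2) * hγδ
  have hp : 0 < γ * (H - δ) := by nlinarith
  have hint := integral_abs_rpow_sub_rpow_add_rpow_le (a := H - 1/2) (q := γ) (T := T) (ε := ε)
    (by linarith) (by linarith) (by linarith) hT.le hε.le
  rw [hexp] at hint
  calc _ ≤ (ε ^ (γ * (H - δ)) / (γ * (H - δ))) ^ (1 / γ) :=
        rpow_le_rpow (intervalIntegral.integral_nonneg hT.le fun s _ => by positivity) hint
          (by positivity)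
    _ = ε ^ (H - δ) / (γ * (H - δ)) ^ (1 / γ) := by
        rw [div_rpow (by positivity) hp.le, ← rpow_mul hε.le]
        field_simp
    _ ≤ ε ^ (H - δ) / √(H - δ) :=
        div_le_div_of_nonneg_left (by positivity) (sqrt_pos.2 (by linarith))
          (sqrt_le_mul_rpow_one_div (by linarith) (by linarith) hγ2)
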